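/- Let x ∈ ℝ^m, y ∈ ℝ^n, r = gcd(m,n), and partition x into r equal blocks x_1,…,x_r ∈ ℝ^{m/r} and y into r equal blocks y_1,…,y_r ∈ ℝ^{n/r}. Then the VV-STP satisfies x ⊙ y = Σ_{i=1}^r x_i ⊙ y_i. -/

import Mathlib

/-!
If `m = r a` and `n = r b`, then `lcm m n = r · lcm a b` and the stretch factors agree:
`lcm m n / m = lcm a b / a`, `lcm m n / n = lcm a b / b`. Hence the stretched vectors
`x ⊗ 1_{t/m}` and `y ⊗ 1_{t/n}` split into `r` consecutive chunks of length `lcm a b`, the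
`i`-th chunks being exactly the stretched `i`-th blocks, and the dot product splits accordingly.
This works for any common divisor `r`, in particular for `gcd m n`.
-/

open Matrix Kronecker Finset

noncomputable section

/-- The all-ones column vector of length `k`, viewed as a `k × 1` matrix. -/
def onesCol (k : ℕ) : Matrix (Fin k) (Fin 1) ℝ := Matrix.of fun _ _ => 1

/-- `A ⊗ 1ᵀ_α`, reindexed to an ordinary `Fin`-indexed matrix. -/
def rightExpand {m n : ℕ} (A : Matrix (Fin m) (Fin n) ℝ) (α : ℕ) :
    Matrix (Fin m) (Fin (n * α)) ℝ :=
  Matrix.reindex (Equiv.prodUnique (Fin m) (Fin 1)) finProdFinEquiv (A ⊗ₖ (onesCol α)ᵀ)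

/-- `B ⊗ 1_β`, reindexed to an ordinary `Fin`-indexed matrix. -/
def leftExpand {p q : ℕ} (B : Matrix (Fin p) (Fin q) ℝ) (β : ℕ) :
    Matrix (Fin (p * β)) (Fin q) ℝ :=
  Matrix.reindex finProdFinEquiv (Equiv.prodUnique (Fin q) (Fin 1)) (B ⊗ₖ onesCol β)

theorem dk_dim_eq (n p : ℕ) :
    n * (Nat.lcm n p / n) = p * (Nat.lcm n p / p) := by
  rw [Nat.mul_div_cancel' (Nat.dvd_lcm_left n p),
    Nat.mul_div_cancel' (Nat.dvd_lcm_right n p)]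

/-- The dimension keeping semi-tensor product (DK-STP)
`A ⊛ B := (A ⊗ 1ᵀ_{t/n})(B ⊗ 1_{t/p})`, `t = lcm(n,p)`. -/
def dkstp {m n p q : ℕ} (A : Matrix (Fin m) (Fin n) ℝ) (B : Matrix (Fin p) (Fin q) ℝ) :
    Matrix (Fin m) (Fin q) ℝ :=
  rightExpand A (Nat.lcm n p / n) *
    (leftExpand B (Nat.lcm n p / p)).submatrix (Fin.cast (dk_dim_eq n p)) id

infixl:70 " ⊛ " => dkstp

/-- The bridge matrix `Ψ_{n×p} := (I_n ⊗ 1ᵀ_{t/n})(I_p ⊗ 1_{t/p})`. -/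
def bridge (n p : ℕ) : Matrix (Fin n) (Fin p) ℝ :=
  (1 : Matrix (Fin n) (Fin n) ℝ) ⊛ (1 : Matrix (Fin p) (Fin p) ℝ)

/-- `x ⊗ 1_α`, as a vector of length `m * α`. -/
def vecExpand {m : ℕ} (x : Fin m → ℝ) (α : ℕ) : Fin (m * α) → ℝ :=
  fun i => x (finProdFinEquiv.symm i).1

/-- The VV-STP `x ⊙ y := (x ⊗ 1_{t/m})ᵀ(y ⊗ 1_{t/n})`, `t = lcm(m,n)`. -/
def vvstp {m n : ℕ} (x : Fin m → ℝ) (y : Fin n → ℝ) : ℝ :=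
  vecExpand x (Nat.lcm m n / m) ⬝ᵥ
    fun i => vecExpand y (Nat.lcm m n / n) (Fin.cast (dk_dim_eq m n) i)

/-- Lets the indices of the stretched vectors `x ⊗ 1_α` be computed by `ℕ`-division. -/
def extendByZero {m : ℕ} (x : Fin m → ℝ) (k : ℕ) : ℝ := if h : k < m then x ⟨k, h⟩ else 0

@[simp]
lemma extendByZero_val {m : ℕ} (x : Fin m → ℝ) (j : Fin m) : extendByZero x j = x j := by
  simp [extendByZero]

lemma vvstp_eq_sum_range {m n : ℕ} (x : Fin m → ℝ) (y : Fin n → ℝ) :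
    vvstp x y = ∑ K ∈ range (Nat.lcm m n),
      extendByZero x (K / (Nat.lcm m n / m)) * extendByZero y (K / (Nat.lcm m n / n)) := by
  calc vvstp x y = ∑ K ∈ range (m * (Nat.lcm m n / m)),
        extendByZero x (K / (Nat.lcm m n / m)) * extendByZero y (K / (Nat.lcm m n / n)) := by
        rw [vvstp, dotProduct, ← Fin.sum_univ_eq_sum_range]
        refine sum_congr rfl fun K _ => ?_
        show x K.divNat * y (Fin.cast (dk_dim_eq m n) K).divNat = _
        rw [← extendByZero_val x, ← extendByZero_val y, Fin.coe_divNat, Fin.coe_divNat,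
          Fin.val_cast]
    _ = _ := by rw [Nat.mul_div_cancel' (Nat.dvd_lcm_left m n)]

lemma Finset.sum_range_mul_eq_sum_sum {M : Type*} [AddCommMonoid M] (f : ℕ → M) (r t : ℕ) :
    ∑ K ∈ range (r * t), f K = ∑ i ∈ range r, ∑ k ∈ range t, f (i * t + k) := by
  induction r with
  | zero => simp
  | succ r ih => rw [Nat.succ_mul, sum_range_add, ih, sum_range_succ]

lemma extendByZero_block {r a α t : ℕ} (x : Fin (r * a) → ℝ) (i : Fin r) {k : ℕ}
    (hk : k < t) (ht : a * α = t) :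
    extendByZero x ((i * t + k) / α) =
      extendByZero (fun j : Fin a => x (finProdFinEquiv (i, j))) (k / α) := by
  subst ht
  have hα : 0 < α := Nat.pos_of_mul_pos_left (Nat.zero_lt_of_lt hk)
  have hj : k / α < a := Nat.div_lt_of_lt_mul (by rwa [Nat.mul_comm])
  have hidx : (i * (a * α) + k) / α = (finProdFinEquiv (i, (⟨k / α, hj⟩ : Fin a)) : ℕ) := by
    rw [finProdFinEquiv_apply_val, show (i : ℕ) * (a * α) + k = α * (a * i) + k by ring,
      Nat.mul_add_div hα, Nat.add_comm]
  rw [hidx, extendByZero_val]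
  exact (extendByZero_val (fun j : Fin a => x (finProdFinEquiv (i, j))) ⟨k / α, hj⟩).symm

theorem vvstp_eq_sum_vvstp_blocks {r a b : ℕ} (x : Fin (r * a) → ℝ) (y : Fin (r * b) → ℝ) :
    vvstp x y = ∑ i : Fin r,
      vvstp (fun j : Fin a => x (finProdFinEquiv (i, j)))
        (fun j : Fin b => y (finProdFinEquiv (i, j))) := by
  rw [vvstp_eq_sum_range, Nat.lcm_mul_left, sum_range_mul_eq_sum_sum, ← Fin.sum_univ_eq_sum_range]
  refine sum_congr rfl fun i _ => ?_
  rw [vvstp_eq_sum_range, Nat.mul_div_mul_left _ _ i.pos, Nat.mul_div_mul_left _ _ i.pos]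
  refine sum_congr rfl fun k hk => ?_
  rw [extendByZero_block x i (mem_range.mp hk) (Nat.mul_div_cancel' (Nat.dvd_lcm_left a b)),
    extendByZero_block y i (mem_range.mp hk) (Nat.mul_div_cancel' (Nat.dvd_lcm_right a b))]

lemma vvstp_comp_cast {m m' n n' : ℕ} (hm : m = m') (hn : n = n') (x : Fin m' → ℝ)
    (y : Fin n' → ℝ) : vvstp (x ∘ Fin.cast hm) (y ∘ Fin.cast hn) = vvstp x y := by
  subst hm hn
  rfl

/-- splitting `x ∈ ℝ^m` and `y ∈ ℝ^n` into `r = gcd(m,n)` equal blocks,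
the VV-STP is the sum of the VV-STPs of corresponding blocks. -/
theorem stmt2 {m n : ℕ} (x : Fin m → ℝ) (y : Fin n → ℝ) :
    vvstp x y =
      ∑ i : Fin (Nat.gcd m n),
        vvstp
          (fun j : Fin (m / Nat.gcd m n) =>
            x (Fin.cast (Nat.mul_div_cancel' (Nat.gcd_dvd_left m n)) (finProdFinEquiv (i, j))))
          (fun j : Fin (n / Nat.gcd m n) =>
            y (Fin.cast (Nat.mul_div_cancel' (Nat.gcd_dvd_right m n)) (finProdFinEquiv (i, j)))) := by
  rw [← vvstp_comp_cast (Nat.mul_div_cancel' (Nat.gcd_dvd_left m n))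
    (Nat.mul_div_cancel' (Nat.gcd_dvd_right m n)) x y]
  exact vvstp_eq_sum_vvstp_blocks _ _
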